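/- Under the Tajima coalescent jump chain, the probability of a complete realization g^T equals 2^(n − c(g) − 1)/(n−1)!, where c(g) is the number of coalescent events joining two singletons (cherries created from two singletons). -/

import Mathlib

/-!
The probability of a trajectory telescopes. Writing `k = α i - α (i - 1) ∈ {0, 1, 2}`, the
numerator `C(α i, k)` equals `α i! / (α (i - 1)! · k!)`, and `k! = 2` exactly at the cherry
steps; since the chain runs from `n` singletons down to none, the numerators multiply to
`n! / 2^c`. The denominators `C(i, 2) = i (i - 1) / 2` multiply to `n! (n - 1)! / 2^(n - 1)`.
-/

/-- A complete realization of the jump chain of Tajima's coalescent on `n` individuals: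
for `i = n` down to `1`, the state `(α i, β i)` records the number of singletons `α i` and
the set of extant vintage labels `β i` when there are `i = α i + |β i|` lineages.  The
chain starts at `(n, ∅)`; at the step from `i` to `i - 1` lineages either two singletons
merge into the new vintage `i - 1`, or a singleton merges with an extant vintage, or two
distinct extant vintages merge. -/
def IsTajimaChain (n : ℕ) (α : ℕ → ℕ) (β : ℕ → Finset ℕ) : Prop :=
  α n = n ∧ β n = ∅ ∧
  (∀ i, 1 ≤ i → i ≤ n → α i + (β i).card = i) ∧
  ∀ i, 2 ≤ i → i ≤ n →
    ((α (i - 1) + 2 = α i ∧ β (i - 1) = insert (i - 1) (β i)) ∨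
     (α (i - 1) + 1 = α i ∧ ∃ v ∈ β i, β (i - 1) = insert (i - 1) (β i \ {v})) ∨
     (α (i - 1) = α i ∧ ∃ v ∈ β i, ∃ w ∈ β i, v ≠ w ∧
        β (i - 1) = insert (i - 1) (β i \ {v, w})))

open Finset Nat

theorem Finset.prod_Icc_succ_mul_eq_of_mul_eq {M : Type*} [CommMonoid M] {f g : ℕ → M}
    {a b : ℕ} (hab : a ≤ b) (step : ∀ i ∈ Icc (a + 1) b, g i * f (i - 1) = f i) :
    (∏ i ∈ Icc (a + 1) b, g i) * f a = f b := by
  induction b, hab using Nat.le_induction with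
  | base => simp
  | succ b hab ih =>
    have hstep := step (b + 1) (by simp; omega)
    rw [Nat.add_sub_cancel] at hstep
    rw [prod_Icc_succ_top (by omega), mul_right_comm,
      ih fun i hi ↦ step i (by simp at hi ⊢; omega), mul_comm, hstep]

theorem Nat.prod_choose_two_mul_two_pow (n : ℕ) :
    (∏ i ∈ Icc 2 n, i.choose 2) * 2 ^ (n - 1) = n ! * (n - 1)! := by
  rcases n with _ | n
  · simp
  have hcard : n + 1 - 1 = #(Icc 2 (n + 1)) := by simp
  have := prod_Icc_succ_mul_eq_of_mul_eq (f := fun i ↦ i ! * (i - 1)!)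
    (g := fun i ↦ i.choose 2 * 2) (by omega : 1 ≤ n + 1) fun i hi ↦ by
      have hi2 : 2 ≤ i := (mem_Icc.mp hi).1
      rw [show i - 1 - 1 = i - 2 by omega, ← choose_mul_factorial_mul_factorial hi2,
        factorial_two]
      ring
  rwa [← prod_mul_pow_card, ← hcard, factorial_one, Nat.sub_self, factorial_zero, mul_one,
    mul_one] at this

namespace IsTajimaChain

variable {n : ℕ} {α : ℕ → ℕ} {β : ℕ → Finset ℕ}

theorem choose_mul_factorial (h : IsTajimaChain n α β) {i : ℕ} (h2 : 2 ≤ i) (hi : i ≤ n) :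
    (α i).choose (α i - α (i - 1)) * (if α (i - 1) + 2 = α i then 2 else 1) * (α (i - 1))! =
      (α i)! := by
  rcases h.2.2.2 i h2 hi with ⟨hα, -⟩ | ⟨hα, -⟩ | ⟨hα, -⟩ <;> rw [← hα]
  · simpa [factorial_two] using
      choose_mul_factorial_mul_factorial (le_add_self : 2 ≤ α (i - 1) + 2)
  · simp [factorial_succ]
  · simp

theorem prod_choose_mul_two_pow_mul_factorial (h : IsTajimaChain n α β) (hn : 1 ≤ n) :
    (∏ i ∈ Icc 2 n, (α i).choose (α i - α (i - 1))) *
        2 ^ #{i ∈ Icc 2 n | α (i - 1) + 2 = α i} * (α 1)! = n ! := by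
  have := prod_Icc_succ_mul_eq_of_mul_eq (f := fun i ↦ (α i)!)
    (g := fun i ↦ (α i).choose (α i - α (i - 1)) * if α (i - 1) + 2 = α i then 2 else 1) hn
    fun i hi ↦ h.choose_mul_factorial (mem_Icc.mp hi).1 (mem_Icc.mp hi).2
  rwa [h.1, prod_mul_distrib, prod_ite, prod_const, prod_const_one, mul_one] at this

theorem alpha_one_eq_zero (h : IsTajimaChain n α β) (hn : 2 ≤ n) : α 1 = 0 := by
  have hmem : 1 ∈ β 1 := by
    rcases h.2.2.2 2 le_rfl hn with ⟨-, hb⟩ | ⟨-, _, _, hb⟩ | ⟨-, _, _, _, _, _, hb⟩ <;>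
      simp [hb]
  have hcard := h.2.2.1 1 le_rfl (by omega)
  have : 1 ≤ #(β 1) := card_pos.mpr ⟨1, hmem⟩
  omega

end IsTajimaChain

theorem tajima_chain_probability_general (n : ℕ) (α : ℕ → ℕ) (β : ℕ → Finset ℕ)
    (h : IsTajimaChain n α β) :
    ∏ i ∈ Finset.Icc 2 n, ((α i).choose (α i - α (i - 1)) : ℚ) / (Nat.choose i 2 : ℚ) =
      2 ^ (n - ((Finset.Icc 2 n).filter (fun i => α (i - 1) + 2 = α i)).card - 1) /
        (Nat.factorial (n - 1) : ℚ) := by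
  rcases lt_or_ge n 2 with hn | hn
  · interval_cases n <;> simp
  set c := #{i ∈ Icc 2 n | α (i - 1) + 2 = α i}
  have hc : c ≤ n - 1 := (card_filter_le _ _).trans (by simp)
  have hnum : (∏ i ∈ Icc 2 n, ((α i).choose (α i - α (i - 1)) : ℚ)) * 2 ^ c = n ! := by
    have := h.prod_choose_mul_two_pow_mul_factorial (by omega)
    rw [h.alpha_one_eq_zero hn, factorial_zero, mul_one] at this
    exact_mod_cast this
  have hden :
      (∏ i ∈ Icc 2 n, (i.choose 2 : ℚ)) * (2 ^ (n - c - 1) * 2 ^ c) = n ! * (n - 1)! := by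
    rw [← pow_add, show n - c - 1 + c = n - 1 by omega]
    exact_mod_cast prod_choose_two_mul_two_pow n
  have hD : (∏ i ∈ Icc 2 n, (i.choose 2 : ℚ)) ≠ 0 :=
    prod_ne_zero_iff.mpr fun i hi ↦ cast_ne_zero.mpr (choose_pos (mem_Icc.mp hi).1).ne'
  rw [prod_div_distrib, div_eq_div_iff hD (by positivity)]
  apply mul_right_cancel₀ (pow_ne_zero c two_ne_zero : (2 : ℚ) ^ c ≠ 0)
  linear_combination (n - 1 : ℕ)! * hnum - hden

/-- Under the Tajima coalescent jump chain, where the transition at `i` lineages in which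
`k` singletons participate has probability `C(α i, k) / C(i, 2)`, the probability of a
complete realization equals `2^(n - c - 1) / (n - 1)!`, where `c` is the number of
coalescent events joining two singletons. -/
theorem tajima_chain_probability (n : ℕ) (hn : 1 ≤ n) (α : ℕ → ℕ) (β : ℕ → Finset ℕ)
    (h : IsTajimaChain n α β) :
    ∏ i ∈ Finset.Icc 2 n, ((α i).choose (α i - α (i - 1)) : ℚ) / (Nat.choose i 2 : ℚ) =
      2 ^ (n - ((Finset.Icc 2 n).filter (fun i => α (i - 1) + 2 = α i)).card - 1) /
        (Nat.factorial (n - 1) : ℚ) :=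
  tajima_chain_probability_general n α β h
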